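/- Let G be a finite connected simple graph with edge weights w : E(G) → ℝ≥0, and let K be a connected subgraph of G such that every edge of K has weight 0 and, conversely, every edge of G of weight 0 having at least one endpoint in V(K) is an edge of K. Let M be a minimum-weight spanning tree of G, i.e., a spanning tree of G minimizing the total weight of its edges. Then the graph with vertex set V(K) and edge set E(K) ∩ E(M) is connected; in particular, every two vertices of K are joined in M by a path all of whose edges are weight-0 edges of K. -/

import Mathlib

/-!
If `K ⊓ M` did not connect `K`, some edge `s(a, b)` of `K` would join two components of `K ⊓ M`.
The `M`-path from `a` to `b` leaves the component of `a` through a tree edge `s(x, y)`, and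
exchanging `s(x, y)` for `s(a, b)` gives another spanning tree of `G`, so minimality yields
`w s(x, y) ≤ w s(a, b) = 0`. Since `x` is a vertex of `K`, the weight-zero edge `s(x, y)` then
belongs to `K ⊓ M`, contradicting that it leaves the component of `a`.
-/

open Finset
open scoped Classical

noncomputable section

variable {V : Type*} [Fintype V]

namespace SimpleGraph

section

variable {V : Type*} {G H M : SimpleGraph V} {a b x y : V}

lemma Reachable.of_forall_adj (h : ∀ ⦃u v : V⦄, G.Adj u v → H.Reachable u v) {u v : V}
    (huv : G.Reachable u v) : H.Reachable u v := by
  rw [reachable_eq_reflTransGen] at h huv ⊢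
  exact Relation.reflTransGen_closed h _ _ huv

lemma Reachable.reachable_deleteEdges_left_or_right (h : G.Reachable a x) (y : V) :
    (G.deleteEdges {s(x, y)}).Reachable a x ∨ (G.deleteEdges {s(x, y)}).Reachable a y := by
  rw [reachable_iff_reflTransGen] at h
  induction h using Relation.ReflTransGen.head_induction_on with
  | refl => exact .inl .rfl
  | @head u c huc _ ih =>
    by_cases hc : s(u, c) = s(x, y)
    · rcases Sym2.eq_iff.mp hc with ⟨rfl, -⟩ | ⟨rfl, -⟩
      · exact .inl .rfl
      · exact .inr .rfl
    · have hD : (G.deleteEdges {s(x, y)}).Adj u c := by simpa [huc] using hc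
      exact ih.imp hD.reachable.trans hD.reachable.trans

lemma IsAcyclic.not_reachable_deleteEdges_of_mem_edges (hM : M.IsAcyclic) {p : M.Walk a b}
    (hp : p.IsPath) {e : Sym2 V} (he : e ∈ p.edges) : ¬(M.deleteEdges {e}).Reachable a b := by
  rintro ⟨q⟩
  have hqp : q.toPath.1.mapLe (deleteEdges_le _) = p := congrArg Subtype.val <|
    (hM.subsingleton_path a b).elim ⟨_, q.toPath.2.mapLe _⟩ ⟨p, hp⟩
  have := q.toPath.1.edges_subset_edgeSet (Walk.edges_mapLe_eq_edges .. ▸ hqp ▸ he)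
  simp [edgeSet_deleteEdges] at this

lemma IsAcyclic.not_reachable_deleteEdges_of_reachable (hM : M.IsAcyclic) (hxy : M.Adj x y)
    (hax : (M.deleteEdges {s(x, y)}).Reachable a x)
    (hby : (M.deleteEdges {s(x, y)}).Reachable b y) :
    ¬(M.deleteEdges {s(x, y)}).Reachable a b := fun hab =>
  isBridge_iff.mp (isAcyclic_iff_forall_adj_isBridge.mp hM hxy) (hax.symm.trans (hab.trans hby))

theorem IsTree.deleteEdges_sup_edge (hM : M.IsTree) (hxy : M.Adj x y)
    (hax : (M.deleteEdges {s(x, y)}).Reachable a x)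
    (hby : (M.deleteEdges {s(x, y)}).Reachable b y) :
    (M.deleteEdges {s(x, y)} ⊔ edge a b).IsTree := by
  set D := M.deleteEdges {s(x, y)}
  have hab := hM.isAcyclic.not_reachable_deleteEdges_of_reachable hxy hax hby
  have hab_adj : (D ⊔ edge a b).Adj a b := by
    simp [edge_adj, show a ≠ b by rintro rfl; exact hab .rfl]
  refine ⟨(connected_iff_exists_forall_reachable _).2 ⟨x, fun v => ?_⟩,
    (hM.isAcyclic.anti (deleteEdges_le _)).sup_edge_of_not_reachable hab⟩
  have hxy' : (D ⊔ edge a b).Reachable x y :=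
    (hax.symm.mono le_sup_left).trans (hab_adj.reachable.trans (hby.mono le_sup_left))
  rcases (hM.connected v x).reachable_deleteEdges_left_or_right y with hvx | hvy
  · exact (hvx.mono le_sup_left).symm
  · exact hxy'.trans (hvy.mono le_sup_left).symm

lemma sum_edgeFinset_deleteEdges_sup_edge [DecidableEq V] [Fintype M.edgeSet] {e : Sym2 V}
    [Fintype (M.deleteEdges {e} ⊔ edge a b).edgeSet] {β : Type*} [AddCommGroup β]
    (f : Sym2 V → β) (he : e ∈ M.edgeSet) (hab : a ≠ b) (hnab : ¬(M.deleteEdges {e}).Adj a b) :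
    ∑ e' ∈ (M.deleteEdges {e} ⊔ edge a b).edgeFinset, f e' =
      ∑ e' ∈ M.edgeFinset, f e' - f e + f s(a, b) := by
  have hE : (M.deleteEdges {e} ⊔ edge a b).edgeFinset = insert s(a, b) (M.edgeFinset.erase e) := by
    ext e'
    simp [edgeSet_edge_of_ne hab, and_comm]
  have hnab' : s(a, b) ∉ M.edgeFinset.erase e := by simpa [and_comm] using hnab
  rw [hE, sum_insert hnab', sum_erase_eq_sub (mem_edgeFinset.mpr he), add_comm]

end

section

variable {G M K : SimpleGraph V} {w : Sym2 V → ℝ} {a b x y : V}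

structure IsMinSpanningTree (G M : SimpleGraph V) (w : Sym2 V → ℝ) : Prop where
  le : M ≤ G
  isTree : M.IsTree
  sum_le : ∀ M' ≤ G, M'.IsTree → ∑ e ∈ M.edgeFinset, w e ≤ ∑ e ∈ M'.edgeFinset, w e

theorem IsMinSpanningTree.weight_le_of_reachable_deleteEdges (hM : G.IsMinSpanningTree M w)
    (hxy : M.Adj x y) (hab : G.Adj a b) (hax : (M.deleteEdges {s(x, y)}).Reachable a x)
    (hby : (M.deleteEdges {s(x, y)}).Reachable b y) :
    w s(x, y) ≤ w s(a, b) := by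
  have hle : M.deleteEdges {s(x, y)} ⊔ edge a b ≤ G :=
    sup_le ((deleteEdges_le _).trans hM.le) ((edge_le_iff G).mpr (.inr hab))
  have hnab := hM.isTree.isAcyclic.not_reachable_deleteEdges_of_reachable hxy hax hby
  -- `convert` reconciles the two `Fintype` instances on the edge set of the new tree
  have hsum := (hM.sum_le _ hle (hM.isTree.deleteEdges_sup_edge hxy hax hby)).trans_eq <| by
    convert sum_edgeFinset_deleteEdges_sup_edge w hxy hab.ne fun h => hnab h.reachable
  linarith

theorem IsMinSpanningTree.reachable_inf_of_adj (hM : G.IsMinSpanningTree M w)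
    (hw : ∀ e, 0 ≤ w e) {W : Set V} (hKG : K ≤ G)
    (hKsupp : ∀ ⦃u v : V⦄, K.Adj u v → u ∈ W ∧ v ∈ W)
    (hK0 : ∀ ⦃u v : V⦄, K.Adj u v → w s(u, v) = 0)
    (h0K : ∀ ⦃u v : V⦄, G.Adj u v → w s(u, v) = 0 → (u ∈ W ∨ v ∈ W) → K.Adj u v)
    (hab : K.Adj a b) : (K ⊓ M).Reachable a b := by
  by_contra hnab
  obtain ⟨p, hp⟩ := (hM.isTree.connected a b).exists_isPath
  obtain ⟨⟨⟨x, y⟩, hxy⟩, hd, hx, hy⟩ := p.exists_boundary_dart {v | (K ⊓ M).Reachable a v} .rfl hnab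
  simp only [Set.mem_ofPred_eq] at hx hy
  have hxW : x ∈ W := by
    rcases ((reachable_iff_reflTransGen _ _).mp hx).cases_tail with rfl | ⟨c, -, hcx⟩
    · exact (hKsupp hab).1
    · exact (hKsupp hcx.1).2
  have hKM_le : K ⊓ M ≤ M.deleteEdges {s(x, y)} := by
    intro u v huv
    refine (deleteEdges_adj ..).mpr ⟨huv.2, fun he => ?_⟩
    rcases Sym2.eq_iff.mp he with ⟨rfl, rfl⟩ | ⟨rfl, rfl⟩
    · exact hy (hx.trans huv.reachable)
    · exact hy (hx.trans huv.symm.reachable)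
  have hax := hx.mono hKM_le
  have hnab_D := hM.isTree.isAcyclic.not_reachable_deleteEdges_of_mem_edges hp
    (List.mem_map_of_mem (f := Dart.edge) hd)
  have hby := ((hM.isTree.connected b x).reachable_deleteEdges_left_or_right y).resolve_left
    fun hbx => hnab_D (hax.trans hbx.symm)
  have hxy0 : w s(x, y) = 0 := le_antisymm
    ((hM.weight_le_of_reachable_deleteEdges hxy (hKG hab) hax hby).trans_eq (hK0 hab)) (hw _)
  exact hy (hx.trans (Adj.reachable ⟨h0K (hM.le hxy) hxy0 (.inl hxW), hxy⟩))

end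

end SimpleGraph

theorem statement16_general (G : SimpleGraph V)
    (w : Sym2 V → ℝ) (hw : ∀ e, 0 ≤ w e)
    (K : SimpleGraph V) (WK : Finset V)
    (hKG : K ≤ G) (hKsupp : ∀ ⦃u v : V⦄, K.Adj u v → u ∈ WK ∧ v ∈ WK)
    (hKconn : ∀ u ∈ WK, ∀ v ∈ WK, K.Reachable u v)
    (hK0 : ∀ ⦃u v : V⦄, K.Adj u v → w s(u, v) = 0)
    (h0K : ∀ ⦃u v : V⦄, G.Adj u v → w s(u, v) = 0 → (u ∈ WK ∨ v ∈ WK) → K.Adj u v)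
    (M : SimpleGraph V) (hMG : M ≤ G) (hMtree : M.IsTree)
    (hMmin : ∀ M' : SimpleGraph V, M' ≤ G → M'.IsTree →
      ∑ e ∈ M.edgeFinset, w e ≤ ∑ e ∈ M'.edgeFinset, w e) :
    ∀ u ∈ WK, ∀ v ∈ WK, (K ⊓ M).Reachable u v := by
  have hM : G.IsMinSpanningTree M w := ⟨hMG, hMtree, hMmin⟩
  intro u hu v hv
  exact (hKconn u hu v hv).of_forall_adj fun _ _ hab =>
    hM.reachable_inf_of_adj hw hKG hKsupp hK0 h0K hab

/-- Let `G` be a finite connected simple graph with nonnegative edge weights `w`,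
and let `K` be a connected subgraph of `G` (with vertex set `WK`) all of whose edges
have weight `0`, such that conversely every weight-`0` edge of `G` with an endpoint
in `WK` is an edge of `K`.  If `M` is a minimum-weight spanning tree of `G`, then
the graph with vertex set `WK` and edge set `E(K) ∩ E(M)` is connected: every two
vertices of `K` are joined in `M` by a path consisting of weight-`0` edges of `K`. -/
theorem statement16 (G : SimpleGraph V) (hG : G.Connected)
    (w : Sym2 V → ℝ) (hw : ∀ e, 0 ≤ w e)
    (K : SimpleGraph V) (WK : Finset V)
    (hKG : K ≤ G) (hKsupp : ∀ ⦃u v : V⦄, K.Adj u v → u ∈ WK ∧ v ∈ WK)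
    (hKconn : ∀ u ∈ WK, ∀ v ∈ WK, K.Reachable u v)
    (hK0 : ∀ ⦃u v : V⦄, K.Adj u v → w s(u, v) = 0)
    (h0K : ∀ ⦃u v : V⦄, G.Adj u v → w s(u, v) = 0 → (u ∈ WK ∨ v ∈ WK) → K.Adj u v)
    (M : SimpleGraph V) (hMG : M ≤ G) (hMtree : M.IsTree)
    (hMmin : ∀ M' : SimpleGraph V, M' ≤ G → M'.IsTree →
      ∑ e ∈ M.edgeFinset, w e ≤ ∑ e ∈ M'.edgeFinset, w e) :
    ∀ u ∈ WK, ∀ v ∈ WK, (K ⊓ M).Reachable u v :=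
  statement16_general G w hw K WK hKG hKsupp hKconn hK0 h0K M hMG hMtree hMmin
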